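/- arXiv:1606.02060 — 7 statements merged into one kernel-verified Lean document; each statement's English description precedes it below -/
import Mathlib

section
/- If n ≥ 3m−2, then the queen's domination number of the m×n board equals m. -/
/-- A queen on square `p` attacks square `q` (distinct squares sharing a
row, column, or diagonal). Squares are `(column, row)` pairs. -/
def attacks (p q : ℤ × ℤ) : Prop :=
  p ≠ q ∧ (p.1 = q.1 ∨ p.2 = q.2 ∨ |p.1 - q.1| = |p.2 - q.2|)

instance : ∀ p q : ℤ × ℤ, Decidable (attacks p q) := fun p q => by
  unfold attacks; infer_instance

/-- The m×n board (m rows, n columns): squares (x,y), 1 ≤ x ≤ n, 1 ≤ y ≤ m. -/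
noncomputable def board (m n : ℕ) : Finset (ℤ × ℤ) :=
  Finset.Icc 1 (n : ℤ) ×ˢ Finset.Icc 1 (m : ℤ)

/-- `D` dominates the board `B`: every square of `B` is in `D` or attacked by a queen of `D`. -/
def Dominates (B D : Finset (ℤ × ℤ)) : Prop :=
  ∀ p ∈ B, p ∈ D ∨ ∃ q ∈ D, attacks q p

/-- Queen domination number of the m×n board. -/
noncomputable def gamma (m n : ℕ) : ℕ :=
  sInf {k | ∃ D ⊆ board m n, D.card = k ∧ Dominates (board m n) D}

/-! A full column of `m` queens dominates the `m × n` board. Conversely, fewer than `m` queens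
leave some row `y` empty, and a queen off row `y` attacks at most three of its squares (one along
its column, two along its diagonals), so `n ≤ 3 (m - 1)`, which `3m - 2 ≤ n` rules out. -/

open Finset

theorem gamma_le_card {m n : ℕ} {D : Finset (ℤ × ℤ)} (hD : D ⊆ board m n)
    (hdom : Dominates (board m n) D) : gamma m n ≤ D.card :=
  Nat.sInf_le ⟨D, hD, rfl, hdom⟩

theorem exists_dominates_card_eq_gamma (m n : ℕ) :
    ∃ D ⊆ board m n, D.card = gamma m n ∧ Dominates (board m n) D :=
  Nat.sInf_mem (s := {k | ∃ D ⊆ board m n, D.card = k ∧ Dominates (board m n) D})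
    ⟨(board m n).card, board m n, subset_rfl, rfl, fun _ hp => Or.inl hp⟩

noncomputable def column (x : ℤ) (m : ℕ) : Finset (ℤ × ℤ) :=
  {x} ×ˢ Icc 1 (m : ℤ)

theorem card_column (x : ℤ) (m : ℕ) : (column x m).card = m := by
  simp [column]

theorem column_one_subset_board {m n : ℕ} (hmn : m ≤ n) : column 1 m ⊆ board m n := by
  intro p hp
  simp only [column, board, mem_product, mem_singleton, mem_Icc] at hp ⊢
  omega

theorem dominates_column (x : ℤ) (m n : ℕ) : Dominates (board m n) (column x m) := by
  rintro ⟨a, b⟩ hp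
  simp only [board, mem_product] at hp
  have hb : (x, b) ∈ column x m := mem_product.mpr ⟨mem_singleton_self x, hp.2⟩
  by_cases hax : a = x
  · exact Or.inl (hax ▸ hb)
  · exact Or.inr ⟨(x, b), hb, fun h => hax (congrArg Prod.fst h).symm, Or.inr (Or.inl rfl)⟩

theorem gamma_le_of_le {m n : ℕ} (hmn : m ≤ n) : gamma m n ≤ m :=
  (gamma_le_card (column_one_subset_board hmn) (dominates_column 1 m n)).trans_eq
    (card_column 1 m)

def rowTrace (q : ℤ × ℤ) (y : ℤ) : Finset ℤ :=
  {q.1 - |q.2 - y|, q.1, q.1 + |q.2 - y|}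

theorem mem_rowTrace_of_attacks {q : ℤ × ℤ} {x y : ℤ} (hatt : attacks q (x, y)) (hy : q.2 ≠ y) :
    x ∈ rowTrace q y := by
  obtain ⟨-, hcol | hrow | hdiag⟩ := hatt
  · simp [rowTrace, hcol]
  · exact absurd hrow hy
  · simp only [rowTrace, mem_insert, mem_singleton] at hdiag ⊢
    rcases (abs_eq (abs_nonneg _)).mp hdiag with h | h <;> omega

theorem le_three_mul_card_of_row_free {m n : ℕ} {D : Finset (ℤ × ℤ)}
    (hdom : Dominates (board m n) D) {y : ℤ} (hy : y ∈ Icc 1 (m : ℤ)) (hfree : ∀ q ∈ D, q.2 ≠ y) :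
    n ≤ 3 * D.card := by
  have hcover : Icc 1 (n : ℤ) ⊆ D.biUnion (rowTrace · y) := by
    intro x hx
    rcases hdom (x, y) (mem_product.mpr ⟨hx, hy⟩) with hin | ⟨q, hq, hatt⟩
    · exact absurd rfl (hfree _ hin)
    · exact mem_biUnion.mpr ⟨q, hq, mem_rowTrace_of_attacks hatt (hfree q hq)⟩
  calc n = (Icc 1 (n : ℤ)).card := by simp
    _ ≤ (D.biUnion (rowTrace · y)).card := card_le_card hcover
    _ ≤ D.card * 3 := card_biUnion_le_card_mul _ _ _ fun _ _ => card_le_three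
    _ = 3 * D.card := mul_comm _ _

theorem exists_row_free {m : ℕ} {D : Finset (ℤ × ℤ)} (hD : D.card < m) :
    ∃ y ∈ Icc 1 (m : ℤ), ∀ q ∈ D, q.2 ≠ y := by
  have hlt : (D.image Prod.snd).card < (Icc 1 (m : ℤ)).card := by
    simpa using card_image_le.trans_lt hD
  obtain ⟨y, hy, hnot⟩ := exists_mem_notMem_of_card_lt_card hlt
  exact ⟨y, hy, fun q hq hqy => hnot (mem_image.mpr ⟨q, hq, hqy⟩)⟩

theorem le_three_mul_card_of_card_lt {m n : ℕ} {D : Finset (ℤ × ℤ)}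
    (hdom : Dominates (board m n) D) (hD : D.card < m) : n ≤ 3 * D.card :=
  let ⟨_, hy, hfree⟩ := exists_row_free hD
  le_three_mul_card_of_row_free hdom hy hfree

theorem gamma_eq_m_of_wide_general (m n : ℕ)
    (h : 3 * m - 2 ≤ n) : gamma m n = m := by
  refine le_antisymm (gamma_le_of_le (by omega)) ?_
  obtain ⟨D, -, hcard, hdom⟩ := exists_dominates_card_eq_gamma m n
  by_contra! hlt
  rw [← hcard] at hlt
  have := le_three_mul_card_of_card_lt hdom hlt
  omega

/-- If n ≥ 3m−2, then the queen's domination number of the m×n board equals m. -/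
theorem gamma_eq_m_of_wide (m n : ℕ) (hm : 1 ≤ m) (hmn : m ≤ n)
    (h : 3 * m - 2 ≤ n) : gamma m n = m :=
  gamma_eq_m_of_wide_general m n h
end

section
/- Any queen placed on an m×n board (m rows) attacks at most 3 squares in any row other than its own; consequently, any set of m−1 queens leaves some square uncovered whenever n ≥ 3m−2 and m ≥ 1, i.e., m−1 queens cannot dominate Q_{m×n} when n ≥ 3m−2. -/
/-!
In a row `r` other than its own, a queen at `q` attacks only its column square and the two
diagonal squares at horizontal distance `|q.2 - r|`, so at most three squares. If fewer than
`m` queens are placed, some row holds none of them; all `n` squares of that row must then be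
attacked, whence `n ≤ 3 (m - 1) < 3m - 2`.
-/

open Finset

lemma filter_row_attacks_subset (B : Finset (ℤ × ℤ)) {q : ℤ × ℤ} {r : ℤ} (hr : r ≠ q.2) :
    B.filter (fun p => p.2 = r ∧ attacks q p) ⊆
      {(q.1 - |q.2 - r|, r), (q.1, r), (q.1 + |q.2 - r|, r)} := by
  rintro ⟨x, y⟩ hp
  obtain ⟨rfl, -, hcol | hrow | hdiag⟩ : y = r ∧ attacks q (x, y) := (mem_filter.mp hp).2
  · simp [hcol]
  · exact absurd hrow.symm hr
  · rcases (abs_eq (abs_nonneg _)).mp hdiag with h | h <;>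
      simp only [mem_insert, mem_singleton, Prod.mk.injEq] <;> grind

lemma card_filter_row_attacks_le_three (B : Finset (ℤ × ℤ)) {q : ℤ × ℤ} {r : ℤ}
    (hr : r ≠ q.2) : (B.filter (fun p => p.2 = r ∧ attacks q p)).card ≤ 3 :=
  (card_le_card (filter_row_attacks_subset B hr)).trans card_le_three

lemma exists_row_avoiding_of_card_lt {D : Finset (ℤ × ℤ)} {m : ℕ} (hD : D.card < m) :
    ∃ r ∈ Icc (1 : ℤ) m, ∀ q ∈ D, q.2 ≠ r := by
  by_contra! hcover
  have hsub : Icc (1 : ℤ) m ⊆ D.image Prod.snd := fun r hr => by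
    simpa using hcover r hr
  have hcard := (card_le_card hsub).trans card_image_le
  rw [Int.card_Icc] at hcard
  omega

lemma le_three_mul_card_of_dominates {m n : ℕ} {D : Finset (ℤ × ℤ)}
    (hdom : Dominates (board m n) D) {r : ℤ} (hr : r ∈ Icc (1 : ℤ) m)
    (hfree : ∀ q ∈ D, q.2 ≠ r) : n ≤ 3 * D.card := by
  have hrow : Icc (1 : ℤ) n ×ˢ {r} ⊆
      D.biUnion (fun q => (board m n).filter (fun p => p.2 = r ∧ attacks q p)) := by
    rintro ⟨x, y⟩ hp
    obtain ⟨hx, rfl⟩ : x ∈ Icc (1 : ℤ) n ∧ r = y := by simpa using hp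
    have hpB : (x, r) ∈ board m n := mem_product.mpr ⟨hx, hr⟩
    rcases hdom _ hpB with hpD | ⟨q, hq, hatt⟩
    · exact absurd rfl (hfree _ hpD)
    · exact mem_biUnion.mpr ⟨q, hq, mem_filter.mpr ⟨hpB, rfl, hatt⟩⟩
  calc n = (Icc (1 : ℤ) n ×ˢ {r}).card := by simp
    _ ≤ D.card * 3 := (card_le_card hrow).trans <| card_biUnion_le_card_mul _ _ _
        fun q hq => card_filter_row_attacks_le_three _ (hfree q hq).symm
    _ = 3 * D.card := mul_comm _ _

/-- A queen attacks at most 3 squares in any row other than its own; consequently,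
when n ≥ 3m−2 (and m ≥ 1), no set of at most m−1 queens dominates the m×n board. -/
theorem at_most_three_per_row_and_no_small_dominating_set (m n : ℕ) (hm : 1 ≤ m)
    (h : 3 * m - 2 ≤ n) :
    (∀ q : ℤ × ℤ, ∀ r : ℤ, r ≠ q.2 →
      ((board m n).filter (fun p => p.2 = r ∧ attacks q p)).card ≤ 3) ∧
    (∀ D ⊆ board m n, D.card ≤ m - 1 → ¬ Dominates (board m n) D) := by
  refine ⟨fun q r hr => card_filter_row_attacks_le_three _ hr, fun D _ hcard hdom => ?_⟩
  obtain ⟨r, hr, hfree⟩ := exists_row_avoiding_of_card_lt (D := D) (m := m) (by omega)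
  have hrow := le_three_mul_card_of_dominates hdom hr hfree
  omega
end

section
/- If m ≤ n, then γ(Q_{m×n}) ≥ min{ m, ⌈(m+n−2)/4⌉ }. -/
section

open Finset

lemma card_le_card_sdiff_image_add_card {α β : Type*} [DecidableEq β] (s : Finset β)
    (D : Finset α) (f : α → β) : #s ≤ #(s \ D.image f) + #D :=
  card_le_card_sdiff_add_card.trans (Nat.add_le_add_left card_image_le _)

def SameDiagonal (p q : ℤ × ℤ) : Prop :=
  p.1 + p.2 = q.1 + q.2 ∨ p.1 - p.2 = q.1 - q.2

lemma exists_sameDiagonal_of_dominates {B D : Finset (ℤ × ℤ)} (hD : Dominates B D)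
    {p : ℤ × ℤ} (hp : p ∈ B) (hcol : p.1 ∉ D.image Prod.fst) (hrow : p.2 ∉ D.image Prod.snd) :
    ∃ q ∈ D, SameDiagonal p q := by
  rcases hD p hp with hpD | ⟨q, hq, -, hcolq | hrowq | hdiag⟩
  · exact absurd (mem_image_of_mem _ hpD) hcol
  · exact absurd (mem_image.mpr ⟨q, hq, hcolq⟩) hcol
  · exact absurd (mem_image.mpr ⟨q, hq, hrowq⟩) hrow
  · refine ⟨q, hq, ?_⟩
    rcases abs_eq_abs.mp hdiag with h | h
    · right; omega
    · left; omega

lemma card_le_of_forall_sameDiagonal {S D : Finset (ℤ × ℤ)} (t : ℕ)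
    (hcover : ∀ p ∈ S, ∃ q ∈ D, SameDiagonal p q)
    (hsum : ∀ s, #(S.filter fun p => p.1 + p.2 = s) ≤ t)
    (hdiff : ∀ d, #(S.filter fun p => p.1 - p.2 = d) ≤ t) :
    #S ≤ #D * (2 * t) := by
  classical
  have hsub : S ⊆ D.biUnion fun q => S.filter (SameDiagonal · q) := fun p hp => by
    obtain ⟨q, hq, hpq⟩ := hcover p hp
    exact mem_biUnion.mpr ⟨q, hq, mem_filter.mpr ⟨hp, hpq⟩⟩
  refine (card_le_card hsub).trans (card_biUnion_le_card_mul _ _ _ fun q _ => ?_)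
  calc #(S.filter (SameDiagonal · q))
      ≤ #(S.filter fun p => p.1 + p.2 = q.1 + q.2) +
          #(S.filter fun p => p.1 - p.2 = q.1 - q.2) := by
        refine (card_le_card fun p hp => ?_).trans (card_union_le _ _)
        rw [mem_filter, SameDiagonal] at hp
        rw [mem_union, mem_filter, mem_filter]
        tauto
    _ ≤ 2 * t := by linarith [hsum (q.1 + q.2), hdiff (q.1 - q.2)]

lemma card_filter_add_eq_le_one_of_product {A B : Finset ℤ} (h : #A ≤ 1 ∨ #B ≤ 1) (s : ℤ) :
    #((A ×ˢ B).filter fun p => p.1 + p.2 = s) ≤ 1 := by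
  refine card_le_one.mpr fun p hp q hq => ?_
  simp only [mem_filter, mem_product] at hp hq
  rcases h with hA | hB
  · have := card_le_one.mp hA _ hp.1.1 _ hq.1.1
    ext <;> omega
  · have := card_le_one.mp hB _ hp.1.2 _ hq.1.2
    ext <;> omega

lemma card_filter_sub_eq_le_one_of_product {A B : Finset ℤ} (h : #A ≤ 1 ∨ #B ≤ 1) (d : ℤ) :
    #((A ×ˢ B).filter fun p => p.1 - p.2 = d) ≤ 1 := by
  refine card_le_one.mpr fun p hp q hq => ?_
  simp only [mem_filter, mem_product] at hp hq
  rcases h with hA | hB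
  · have := card_le_one.mp hA _ hp.1.1 _ hq.1.1
    ext <;> omega
  · have := card_le_one.mp hB _ hp.1.2 _ hq.1.2
    ext <;> omega

noncomputable def rectBoundary (c₁ c₂ r₁ r₂ : ℤ) : Finset (ℤ × ℤ) :=
  (Icc c₁ c₂ ×ˢ Icc r₁ r₂).filter fun p => p.1 = c₁ ∨ p.1 = c₂ ∨ p.2 = r₁ ∨ p.2 = r₂

/-- On a diagonal, only the lowest and the highest square inside the rectangle can lie on its
boundary. -/
lemma card_rectBoundary_filter_add_eq_le_two (c₁ c₂ r₁ r₂ s : ℤ) :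
    #((rectBoundary c₁ c₂ r₁ r₂).filter fun p => p.1 + p.2 = s) ≤ 2 := by
  let lo := max r₁ (s - c₂)
  let hi := min r₂ (s - c₁)
  refine (card_le_card fun p hp => ?_).trans (card_le_two (a := (s - lo, lo)) (b := (s - hi, hi)))
  simp only [rectBoundary, mem_filter, mem_product, mem_Icc] at hp
  simp only [mem_insert, mem_singleton, Prod.ext_iff]
  omega

lemma card_rectBoundary_filter_sub_eq_le_two (c₁ c₂ r₁ r₂ d : ℤ) :
    #((rectBoundary c₁ c₂ r₁ r₂).filter fun p => p.1 - p.2 = d) ≤ 2 := by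
  let lo := max r₁ (c₁ - d)
  let hi := min r₂ (c₂ - d)
  refine (card_le_card fun p hp => ?_).trans (card_le_two (a := (d + lo, lo)) (b := (d + hi, hi)))
  simp only [rectBoundary, mem_filter, mem_product, mem_Icc] at hp
  simp only [mem_insert, mem_singleton, Prod.ext_iff]
  omega

lemma two_mul_card_add_two_mul_card_le_card_frame {α β : Type*} [DecidableEq α] [DecidableEq β]
    {C : Finset α} {R : Finset β} {c₁ c₂ : α} {r₁ r₂ : β} (hc : c₁ ≠ c₂) (hr : r₁ ≠ r₂) :
    2 * #C + 2 * #R ≤ #(C ×ˢ {r₁, r₂} ∪ {c₁, c₂} ×ˢ R) + 4 := by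
  have hinter : #((C ×ˢ {r₁, r₂}) ∩ ({c₁, c₂} ×ˢ R)) ≤ 4 := by
    rw [product_inter_product]
    calc #((C ∩ {c₁, c₂}) ×ˢ ({r₁, r₂} ∩ R)) ≤ #({c₁, c₂} ×ˢ {r₁, r₂}) :=
          card_le_card (product_subset_product inter_subset_right inter_subset_left)
      _ ≤ 4 := by rw [card_product]; exact Nat.mul_le_mul card_le_two card_le_two
  have := card_union_add_card_inter (C ×ˢ {r₁, r₂}) ({c₁, c₂} ×ˢ R)
  rw [card_product, card_product, card_pair hc, card_pair hr] at this
  omega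

lemma card_add_card_le_of_forall_sameDiagonal_of_one_lt {C R : Finset ℤ} {D : Finset (ℤ × ℤ)}
    (hC : 1 < #C) (hR : 1 < #R) (hcover : ∀ p ∈ C ×ˢ R, ∃ q ∈ D, SameDiagonal p q) :
    #C + #R ≤ 2 * #D + 2 := by
  have hC₀ : C.Nonempty := card_pos.mp (by omega)
  have hR₀ : R.Nonempty := card_pos.mp (by omega)
  set c₁ := C.min' hC₀
  set c₂ := C.max' hC₀
  set r₁ := R.min' hR₀
  set r₂ := R.max' hR₀
  set F := C ×ˢ {r₁, r₂} ∪ {c₁, c₂} ×ˢ R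
  have hFsub : F ⊆ C ×ˢ R := by
    refine union_subset (product_subset_product_right ?_) (product_subset_product_left ?_) <;>
      simp only [insert_subset_iff, singleton_subset_iff] <;>
      exact ⟨min'_mem _ _, max'_mem _ _⟩
  have hFbdry : F ⊆ rectBoundary c₁ c₂ r₁ r₂ := by
    intro p hp
    obtain ⟨hp₁, hp₂⟩ := mem_product.mp (hFsub hp)
    have := C.min'_le _ hp₁; have := C.le_max' _ hp₁
    have := R.min'_le _ hp₂; have := R.le_max' _ hp₂
    simp only [F, rectBoundary, mem_union, mem_product, mem_insert, mem_singleton, mem_filter,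
      mem_Icc] at hp ⊢
    omega
  have hFcard : 2 * #C + 2 * #R ≤ #F + 4 := two_mul_card_add_two_mul_card_le_card_frame
    (min'_lt_max'_of_card C hC).ne (min'_lt_max'_of_card R hR).ne
  have hFD := card_le_of_forall_sameDiagonal 2 (fun p hp => hcover p (hFsub hp))
    (fun s => (card_le_card (filter_subset_filter _ hFbdry)).trans
      (card_rectBoundary_filter_add_eq_le_two c₁ c₂ r₁ r₂ s))
    (fun d => (card_le_card (filter_subset_filter _ hFbdry)).trans
      (card_rectBoundary_filter_sub_eq_le_two c₁ c₂ r₁ r₂ d))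
  omega

lemma card_add_card_le_of_forall_sameDiagonal {C R : Finset ℤ} {D : Finset (ℤ × ℤ)}
    (hC : C.Nonempty) (hR : R.Nonempty) (hcover : ∀ p ∈ C ×ˢ R, ∃ q ∈ D, SameDiagonal p q) :
    #C + #R ≤ 2 * #D + 2 := by
  by_cases hthin : #C ≤ 1 ∨ #R ≤ 1
  · have hCR := card_le_of_forall_sameDiagonal 1 hcover
      (card_filter_add_eq_le_one_of_product hthin) (card_filter_sub_eq_le_one_of_product hthin)
    rw [card_product] at hCR
    have := hC.card_pos
    have := hR.card_pos
    rcases hthin with h | h <;> nlinarith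
  · push Not at hthin
    exact card_add_card_le_of_forall_sameDiagonal_of_one_lt hthin.1 hthin.2 hcover

end

/-- If m ≤ n, then γ(Q_{m×n}) ≥ min { m, ⌈(m+n−2)/4⌉ }. -/
theorem gamma_lower_bound (m n : ℕ) (hmn : m ≤ n) :
    min m ((m + n - 2 + 3) / 4) ≤ gamma m n := by
  refine le_csInf ⟨_, board m n, subset_rfl, rfl, fun p hp => Or.inl hp⟩ ?_
  rintro _ ⟨D, -, rfl, hD⟩
  by_contra! hlt
  set C := Finset.Icc 1 (n : ℤ) \ D.image Prod.fst
  set R := Finset.Icc 1 (m : ℤ) \ D.image Prod.snd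
  have hC : n ≤ C.card + D.card := by
    simpa using card_le_card_sdiff_image_add_card (Finset.Icc 1 (n : ℤ)) D Prod.fst
  have hR : m ≤ R.card + D.card := by
    simpa using card_le_card_sdiff_image_add_card (Finset.Icc 1 (m : ℤ)) D Prod.snd
  have hfree : ∀ p ∈ C ×ˢ R, ∃ q ∈ D, SameDiagonal p q := fun p hp => by
    simp only [C, R, Finset.mem_product, Finset.mem_sdiff] at hp
    exact exists_sameDiagonal_of_dominates hD (Finset.mem_product.mpr ⟨hp.1.1, hp.2.1⟩)
      hp.1.2 hp.2.2
  have := card_add_card_le_of_forall_sameDiagonal (Finset.card_pos.mp (by omega))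
    (Finset.card_pos.mp (by omega)) hfree
  omega
end

section
/- Suppose m ≤ n < 3m+2 and γ(Q_{m×n}) = (m+n−2)/4. Then every minimum dominating set of Q_{m×n} is independent (no two of its squares share a row, column, or diagonal). -/
/-!
Let `K = #D`, so `4K + 2 = m + n`. As `K < m`, some row is empty; each of its `n` squares is
covered by a column or a diagonal of `D`, each of which meets the row once, so `n ≤ 3K` and
hence at least two rows and two columns are empty. Let `a < b` be the extreme empty columns and
`c < d` the extreme empty rows. Every column outside `[a, b]` and every row outside `[c, d]` is
occupied, while each square of the border of `[a, b] × [c, d]` is covered by an occupied column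
inside `(a, b)`, an occupied row inside `(c, d)` or a diagonal, each meeting the border at most
twice. Adding up, `m + n - 2` is at most the total number of lines occupied by `D`, which is at
most `4K = m + n - 2`; so no line holds two queens.
-/

open Finset

def occupiedCols (D : Finset (ℤ × ℤ)) : Finset ℤ := D.image Prod.fst
def occupiedRows (D : Finset (ℤ × ℤ)) : Finset ℤ := D.image Prod.snd
def occupiedSums (D : Finset (ℤ × ℤ)) : Finset ℤ := D.image fun p => p.1 + p.2
def occupiedDiffs (D : Finset (ℤ × ℤ)) : Finset ℤ := D.image fun p => p.1 - p.2

theorem attacks_iff {p q : ℤ × ℤ} : attacks p q ↔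
    p ≠ q ∧ (p.1 = q.1 ∨ p.2 = q.2 ∨ p.1 + p.2 = q.1 + q.2 ∨ p.1 - p.2 = q.1 - q.2) := by
  unfold attacks
  rw [abs_eq_abs]
  constructor <;> rintro ⟨hne, h | h | h | h⟩ <;> refine ⟨hne, ?_⟩ <;> omega

theorem Dominates.mem_occupied {B D : Finset (ℤ × ℤ)} (hD : Dominates B D) {p : ℤ × ℤ}
    (hp : p ∈ B) :
    p.1 ∈ occupiedCols D ∨ p.2 ∈ occupiedRows D ∨ p.1 + p.2 ∈ occupiedSums D ∨
      p.1 - p.2 ∈ occupiedDiffs D := by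
  simp only [occupiedCols, occupiedRows, occupiedSums, occupiedDiffs, mem_image]
  rcases hD p hp with hpD | ⟨q, hqD, hqp⟩
  · exact Or.inl ⟨p, hpD, rfl⟩
  · rcases (attacks_iff.mp hqp).2 with h | h | h | h
    · exact Or.inl ⟨q, hqD, h⟩
    · exact Or.inr <| Or.inl ⟨q, hqD, h⟩
    · exact Or.inr <| Or.inr <| Or.inl ⟨q, hqD, h⟩
    · exact Or.inr <| Or.inr <| Or.inr ⟨q, hqD, h⟩

theorem Dominates.le_card_occupied_of_notMem_occupiedRows {m n : ℕ} {D : Finset (ℤ × ℤ)}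
    (hD : Dominates (board m n) D) {r : ℤ} (hr : r ∈ Icc 1 (m : ℤ)) (hrD : r ∉ occupiedRows D) :
    n ≤ #(occupiedCols D) + #(occupiedSums D) + #(occupiedDiffs D) := by
  have hrow : Icc 1 (n : ℤ) ⊆ occupiedCols D ∪ ((occupiedSums D).image (· - r) ∪
      (occupiedDiffs D).image (· + r)) := by
    intro x hx
    have hxr : (x, r) ∈ board m n := mem_product.mpr ⟨hx, hr⟩
    simp only [mem_union, mem_image]
    rcases hD.mem_occupied hxr with h | h | h | h
    · exact Or.inl h
    · exact absurd h hrD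
    · exact Or.inr <| Or.inl ⟨_, h, by simp⟩
    · exact Or.inr <| Or.inr ⟨_, h, by simp⟩
  calc n = #(Icc 1 (n : ℤ)) := by simp
    _ ≤ _ := card_le_card hrow
    _ ≤ _ := (card_union_le _ _).trans (add_le_add_right (card_union_le _ _) _)
    _ ≤ _ := add_le_add_right (add_le_add card_image_le card_image_le) _
    _ = _ := (add_assoc _ _ _).symm

theorem exists_extreme_notMem_Icc {S : Finset ℤ} {n : ℕ} (h : #S + 2 ≤ n) :
    ∃ a b : ℤ, 1 ≤ a ∧ a < b ∧ b ≤ n ∧ a ∉ S ∧ b ∉ S ∧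
      a - 1 + (n - b) + #(S ∩ Ioo a b) ≤ #S := by
  have hU : 2 ≤ #(Icc 1 (n : ℤ) \ S) := by
    have := le_card_sdiff S (Icc 1 (n : ℤ))
    simp only [Int.card_Icc, add_sub_cancel_right, Int.toNat_natCast] at this
    omega
  set U := Icc 1 (n : ℤ) \ S
  have hne : U.Nonempty := card_pos.mp (by omega)
  set a := U.min' hne
  set b := U.max' hne
  have hab : a < b := U.min'_lt_max'_of_card (by omega)
  have ha := mem_sdiff.mp (U.min'_mem hne)
  have hb := mem_sdiff.mp (U.max'_mem hne)
  rw [mem_Icc] at ha hb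
  have hout : ∀ x : ℤ, 1 ≤ x → x ≤ n → (x < a ∨ b < x) → x ∈ S := fun x hx1 hxn hx => by
    by_contra hxS
    have hxU : x ∈ U := mem_sdiff.mpr ⟨mem_Icc.mpr ⟨hx1, hxn⟩, hxS⟩
    have := U.min'_le x hxU
    have := U.le_max' x hxU
    omega
  have hsub : Ico 1 a ∪ Ioc b n ∪ (S ∩ Ioo a b) ⊆ S := by
    intro x hx
    simp only [mem_union, mem_Ico, mem_Ioc, mem_inter] at hx
    rcases hx with (hx | hx) | hx
    · exact hout x hx.1 (by omega) (Or.inl hx.2)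
    · exact hout x (by omega) hx.2 (Or.inr hx.1)
    · exact hx.1
  have hdisj₁ : Disjoint (Ico 1 a) (Ioc b n) :=
    disjoint_left.mpr fun x hx hx' => by simp only [mem_Ico, mem_Ioc] at hx hx'; omega
  have hdisj₂ : Disjoint (Ico 1 a ∪ Ioc b n) (S ∩ Ioo a b) :=
    disjoint_left.mpr fun x hx hx' => by
      simp only [mem_union, mem_Ico, mem_Ioc, mem_inter, mem_Ioo] at hx hx'; omega
  refine ⟨a, b, ha.1.1, hab, hb.1.2, ha.2, hb.2, ?_⟩
  have := card_le_card hsub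
  rw [card_union_of_disjoint hdisj₂, card_union_of_disjoint hdisj₁, Int.card_Ico,
    Int.card_Ioc] at this
  omega

theorem card_filter_mem_le_mul {α β : Type*} [DecidableEq β] {s : Finset α} {t : Finset β}
    {f : α → β} {k : ℕ} (h : ∀ b ∈ t, #{a ∈ s | f a = b} ≤ k) :
    #{a ∈ s | f a ∈ t} ≤ k * #t :=
  card_le_mul_card_image_of_maps_to (fun _ ha => (mem_filter.mp ha).2) k fun b hb =>
    (card_le_card (filter_subset_filter _ (filter_subset _ s))).trans (h b hb)

noncomputable def rectBorder (a b c d : ℤ) : Finset (ℤ × ℤ) :=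
  ({a, b} ×ˢ Icc c d) ∪ (Ioo a b ×ˢ {c, d})

section rectBorder

variable {a b c d : ℤ}

theorem mem_rectBorder {p : ℤ × ℤ} : p ∈ rectBorder a b c d ↔
    (p.1 = a ∨ p.1 = b) ∧ c ≤ p.2 ∧ p.2 ≤ d ∨ (a < p.1 ∧ p.1 < b) ∧ (p.2 = c ∨ p.2 = d) := by
  simp [rectBorder]

theorem card_rectBorder (hab : a < b) (hcd : c < d) :
    (#(rectBorder a b c d) : ℤ) = 2 * (b - a) + 2 * (d - c) := by
  have hdisj : Disjoint ({a, b} ×ˢ Icc c d) (Ioo a b ×ˢ {c, d}) :=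
    disjoint_left.mpr fun p hp hp' => by
      simp only [mem_product, mem_insert, mem_singleton, mem_Icc, mem_Ioo] at hp hp'
      omega
  rw [rectBorder, card_union_of_disjoint hdisj, card_product, card_product,
    card_pair hab.ne, card_pair hcd.ne, Int.card_Icc, Int.card_Ioo]
  omega

theorem card_filter_fst_eq_le_two {x : ℤ} (hxa : x ≠ a) (hxb : x ≠ b) :
    #{p ∈ rectBorder a b c d | p.1 = x} ≤ 2 := by
  refine (card_le_card fun p hp => ?_).trans (card_le_two (a := (x, c)) (b := (x, d)))
  simp only [mem_filter, mem_rectBorder, mem_insert, mem_singleton, Prod.ext_iff] at hp ⊢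
  omega

theorem card_filter_snd_eq_le_two {y : ℤ} (hyc : y ≠ c) (hyd : y ≠ d) :
    #{p ∈ rectBorder a b c d | p.2 = y} ≤ 2 := by
  refine (card_le_card fun p hp => ?_).trans (card_le_two (a := (a, y)) (b := (b, y)))
  simp only [mem_filter, mem_rectBorder, mem_insert, mem_singleton, Prod.ext_iff] at hp ⊢
  omega

-- The diagonal `x + y = v` enters and leaves the rectangle at `x = max a (v - d)` and
-- `x = min b (v - c)`; every other square of it is interior.
theorem card_filter_add_eq_le_two (v : ℤ) :
    #{p ∈ rectBorder a b c d | p.1 + p.2 = v} ≤ 2 := by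
  refine (card_le_card fun p hp => ?_).trans (card_le_two
    (a := (max a (v - d), v - max a (v - d))) (b := (min b (v - c), v - min b (v - c))))
  simp only [mem_filter, mem_rectBorder, mem_insert, mem_singleton, Prod.ext_iff] at hp ⊢
  omega

theorem card_filter_sub_eq_le_two (v : ℤ) :
    #{p ∈ rectBorder a b c d | p.1 - p.2 = v} ≤ 2 := by
  refine (card_le_card fun p hp => ?_).trans (card_le_two
    (a := (max a (v + c), max a (v + c) - v)) (b := (min b (v + d), min b (v + d) - v)))
  simp only [mem_filter, mem_rectBorder, mem_insert, mem_singleton, Prod.ext_iff] at hp ⊢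
  omega

end rectBorder

theorem Dominates.card_rectBorder_le {B D : Finset (ℤ × ℤ)} (hD : Dominates B D)
    {a b c d : ℤ} (hB : rectBorder a b c d ⊆ B) (ha : a ∉ occupiedCols D)
    (hb : b ∉ occupiedCols D) (hc : c ∉ occupiedRows D) (hd : d ∉ occupiedRows D) :
    #(rectBorder a b c d) ≤ 2 * (#(occupiedCols D ∩ Ioo a b) + #(occupiedRows D ∩ Ioo c d) +
      #(occupiedSums D) + #(occupiedDiffs D)) := by
  set R := rectBorder a b c d
  have hcover : R ⊆ {p ∈ R | p.1 ∈ occupiedCols D ∩ Ioo a b} ∪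
      {p ∈ R | p.2 ∈ occupiedRows D ∩ Ioo c d} ∪ {p ∈ R | p.1 + p.2 ∈ occupiedSums D} ∪
      {p ∈ R | p.1 - p.2 ∈ occupiedDiffs D} := by
    intro p hp
    have hp' := mem_rectBorder.mp hp
    simp only [mem_union, mem_filter, mem_inter, mem_Ioo]
    rcases hD.mem_occupied (hB hp) with h | h | h | h
    · have : p.1 ≠ a := fun h' => ha (h' ▸ h)
      have : p.1 ≠ b := fun h' => hb (h' ▸ h)
      exact Or.inl <| Or.inl <| Or.inl ⟨hp, h, by omega⟩
    · have : p.2 ≠ c := fun h' => hc (h' ▸ h)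
      have : p.2 ≠ d := fun h' => hd (h' ▸ h)
      exact Or.inl <| Or.inl <| Or.inr ⟨hp, h, by omega⟩
    · exact Or.inl <| Or.inr ⟨hp, h⟩
    · exact Or.inr ⟨hp, h⟩
  have hcols := card_filter_mem_le_mul (s := R) (t := occupiedCols D ∩ Ioo a b) (f := Prod.fst)
    fun x hx => have hx := (mem_Ioo.mp (mem_inter.mp hx).2)
      card_filter_fst_eq_le_two hx.1.ne' hx.2.ne
  have hrows := card_filter_mem_le_mul (s := R) (t := occupiedRows D ∩ Ioo c d) (f := Prod.snd)
    fun y hy => have hy := (mem_Ioo.mp (mem_inter.mp hy).2)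
      card_filter_snd_eq_le_two hy.1.ne' hy.2.ne
  have hsums := card_filter_mem_le_mul (s := R) (t := occupiedSums D)
    (f := fun p => p.1 + p.2) fun v _ => card_filter_add_eq_le_two v
  have hdiffs := card_filter_mem_le_mul (s := R) (t := occupiedDiffs D)
    (f := fun p => p.1 - p.2) fun v _ => card_filter_sub_eq_le_two v
  have hunion := (card_le_card hcover).trans <| (card_union_le _ _).trans <|
    add_le_add_left ((card_union_le _ _).trans (add_le_add_left (card_union_le _ _) _)) _
  omega

theorem Dominates.card_occupied_ge {m n : ℕ} {D : Finset (ℤ × ℤ)} (hD : Dominates (board m n) D)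
    (hcols : #(occupiedCols D) + 2 ≤ n) (hrows : #(occupiedRows D) + 2 ≤ m) :
    (m + n - 2 : ℤ) ≤
      #(occupiedCols D) + #(occupiedRows D) + #(occupiedSums D) + #(occupiedDiffs D) := by
  obtain ⟨a, b, ha1, hab, hbn, ha, hb, hC⟩ := exists_extreme_notMem_Icc hcols
  obtain ⟨c, d, hc1, hcd, hdm, hc, hd, hR⟩ := exists_extreme_notMem_Icc hrows
  have hB : rectBorder a b c d ⊆ board m n := fun p hp => by
    simp only [board, mem_product, mem_Icc, mem_rectBorder] at hp ⊢
    omega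
  have hborder := hD.card_rectBorder_le hB ha hb hc hd
  zify at hborder
  rw [card_rectBorder hab hcd] at hborder
  omega

theorem card_occupiedCols_le (D : Finset (ℤ × ℤ)) : #(occupiedCols D) ≤ #D := card_image_le
theorem card_occupiedRows_le (D : Finset (ℤ × ℤ)) : #(occupiedRows D) ≤ #D := card_image_le
theorem card_occupiedSums_le (D : Finset (ℤ × ℤ)) : #(occupiedSums D) ≤ #D := card_image_le
theorem card_occupiedDiffs_le (D : Finset (ℤ × ℤ)) : #(occupiedDiffs D) ≤ #D := card_image_le

theorem not_attacks_of_card_occupied {D : Finset (ℤ × ℤ)}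
    (h : 4 * #D ≤ #(occupiedCols D) + #(occupiedRows D) + #(occupiedSums D) +
      #(occupiedDiffs D)) :
    ∀ p ∈ D, ∀ q ∈ D, ¬ attacks p q := by
  have hC := card_occupiedCols_le D
  have hR := card_occupiedRows_le D
  have hS := card_occupiedSums_le D
  have hG := card_occupiedDiffs_le D
  have injC : Set.InjOn Prod.fst (D : Set (ℤ × ℤ)) := card_image_iff.mp (hC.antisymm (by omega))
  have injR : Set.InjOn Prod.snd (D : Set (ℤ × ℤ)) := card_image_iff.mp (hR.antisymm (by omega))
  have injS : Set.InjOn (fun p : ℤ × ℤ => p.1 + p.2) (D : Set (ℤ × ℤ)) :=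
    card_image_iff.mp (hS.antisymm (by omega))
  have injG : Set.InjOn (fun p : ℤ × ℤ => p.1 - p.2) (D : Set (ℤ × ℤ)) :=
    card_image_iff.mp (hG.antisymm (by omega))
  intro p hp q hq hpq
  obtain ⟨hne, h | h | h | h⟩ := attacks_iff.mp hpq
  · exact hne (injC hp hq h)
  · exact hne (injR hp hq h)
  · exact hne (injS hp hq h)
  · exact hne (injG hp hq h)

theorem min_dominating_independent_general (m n : ℕ) (hmn : m ≤ n)
    (hn : n < 3 * m + 2) (hγ : 4 * gamma m n = m + n - 2) :
    ∀ D ⊆ board m n, Dominates (board m n) D → D.card = gamma m n →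
      ∀ p ∈ D, ∀ q ∈ D, ¬ attacks p q := by
  intro D hDb hD hcard p hp
  have hm : 1 ≤ m := by
    have := (mem_product.mp (hDb hp)).2
    rw [mem_Icc] at this
    omega
  have hK : 4 * #D + 2 = m + n := by omega
  have hC := card_occupiedCols_le D
  have hR := card_occupiedRows_le D
  have hS := card_occupiedSums_le D
  have hG := card_occupiedDiffs_le D
  obtain ⟨r, hr, hrD⟩ := exists_mem_notMem_of_card_lt_card (s := occupiedRows D)
    (t := Icc 1 (m : ℤ)) (by rw [Int.card_Icc]; omega)
  have hrow := hD.le_card_occupied_of_notMem_occupiedRows hr hrD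
  have hkey := hD.card_occupied_ge (by omega) (by omega)
  exact not_attacks_of_card_occupied (by omega) p hp

/-- If m ≤ n < 3m+2 and γ(Q_{m×n}) = (m+n−2)/4, then every minimum dominating set
of Q_{m×n} is independent: no two of its squares share a row, column, or diagonal. -/
theorem min_dominating_independent (m n : ℕ) (hm : 1 ≤ m) (hmn : m ≤ n)
    (hn : n < 3 * m + 2) (hγ : 4 * gamma m n = m + n - 2) :
    ∀ D ⊆ board m n, Dominates (board m n) D → D.card = gamma m n →
      ∀ p ∈ D, ∀ q ∈ D, ¬ attacks p q :=
  min_dominating_independent_general m n hmn hn hγ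
end

section
/- If a dominating set D of the queens graph Q_{m×n} contains a foursome F centered at (x,y), then the set D' obtained by replacing F with its horizontal reflection F' is also a dominating set of Q_{m×n} of the same size as D. -/
/-- Queens adjacency on rational coordinates. -/
def attacksQ (p q : ℚ × ℚ) : Prop :=
  p ≠ q ∧ (p.1 = q.1 ∨ p.2 = q.2 ∨ |p.1 - q.1| = |p.2 - q.2|)

/-- The m×n board (m rows, n columns) as integer points inside ℚ². -/
def boardQ (m n : ℕ) : Set (ℚ × ℚ) :=
  {p | ∃ i j : ℤ, 1 ≤ i ∧ i ≤ (n : ℤ) ∧ 1 ≤ j ∧ j ≤ (m : ℤ) ∧ p = ((i : ℚ), (j : ℚ))}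

def DominatesQ (B : Set (ℚ × ℚ)) (D : Finset (ℚ × ℚ)) : Prop :=
  ∀ p ∈ B, p ∈ D ∨ ∃ q ∈ D, attacksQ q p

/-!
A queen covers exactly the squares on its column, row, diagonal and antidiagonal. The foursome
`F` is invariant under the quarter turn about its centre, so its horizontal reflection `F'` is
also its reflection in the vertical axis and in both diagonal axes through the centre. Each of
these four mirrors fixes one family of lines pointwise, hence every line through a square of `F`
also passes through a square of `F'`, and whatever `F` covered is covered by `F'`.
-/

open Finset

def SharesLine (q p : ℚ × ℚ) : Prop :=
  q.1 = p.1 ∨ q.2 = p.2 ∨ q.1 - q.2 = p.1 - p.2 ∨ q.1 + q.2 = p.1 + p.2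

theorem SharesLine.refl (p : ℚ × ℚ) : SharesLine p p :=
  Or.inl rfl

theorem attacksQ_iff {q p : ℚ × ℚ} : attacksQ q p ↔ q ≠ p ∧ SharesLine q p := by
  have hdiag : |q.1 - p.1| = |q.2 - p.2| ↔ q.1 - q.2 = p.1 - p.2 ∨ q.1 + q.2 = p.1 + p.2 := by
    rw [abs_eq_abs]
    constructor <;> rintro (h | h) <;> [left; right; left; right] <;> linarith
  rw [attacksQ, SharesLine, hdiag]

theorem mem_or_exists_attacksQ_iff {D : Finset (ℚ × ℚ)} {p : ℚ × ℚ} :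
    (p ∈ D ∨ ∃ q ∈ D, attacksQ q p) ↔ ∃ q ∈ D, SharesLine q p := by
  constructor
  · rintro (hp | ⟨q, hq, hqp⟩)
    · exact ⟨p, hp, SharesLine.refl p⟩
    · exact ⟨q, hq, (attacksQ_iff.1 hqp).2⟩
  · rintro ⟨q, hq, hqp⟩
    by_cases hqp' : q = p
    · exact Or.inl (hqp' ▸ hq)
    · exact Or.inr ⟨q, hq, attacksQ_iff.2 ⟨hqp', hqp⟩⟩

theorem dominatesQ_iff {B : Set (ℚ × ℚ)} {D : Finset (ℚ × ℚ)} :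
    DominatesQ B D ↔ ∀ p ∈ B, ∃ q ∈ D, SharesLine q p :=
  forall₂_congr fun _ _ => mem_or_exists_attacksQ_iff

theorem DominatesQ.sdiff_union {B : Set (ℚ × ℚ)} {D F F' : Finset (ℚ × ℚ)}
    (hD : DominatesQ B D) (hF : ∀ q ∈ F, ∀ p, SharesLine q p → ∃ r ∈ F', SharesLine r p) :
    DominatesQ B (D \ F ∪ F') := by
  rw [dominatesQ_iff] at hD ⊢
  intro p hp
  obtain ⟨q, hqD, hqp⟩ := hD p hp
  by_cases hqF : q ∈ F
  · obtain ⟨r, hr, hrp⟩ := hF q hqF p hqp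
    exact ⟨r, mem_union_right _ hr, hrp⟩
  · exact ⟨q, mem_union_left _ (mem_sdiff.2 ⟨hqD, hqF⟩), hqp⟩

theorem card_sdiff_union_of_card_eq {D F F' : Finset (ℚ × ℚ)} (hFD : F ⊆ D)
    (hdisj : Disjoint F' (D \ F)) (hcard : F'.card = F.card) :
    (D \ F ∪ F').card = D.card := by
  rw [card_union_of_disjoint hdisj.symm, card_sdiff_of_subset hFD, hcard]
  have := card_le_card hFD
  omega

section Reflections

variable (c : ℚ × ℚ)

def reflectHoriz (p : ℚ × ℚ) : ℚ × ℚ := (p.1, 2 * c.2 - p.2)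

def reflectVert (p : ℚ × ℚ) : ℚ × ℚ := (2 * c.1 - p.1, p.2)

def reflectAntidiag (p : ℚ × ℚ) : ℚ × ℚ := (c.1 + c.2 - p.2, c.1 + c.2 - p.1)

def reflectDiag (p : ℚ × ℚ) : ℚ × ℚ := (c.1 - c.2 + p.2, c.2 - c.1 + p.1)

theorem reflectHoriz_involutive : Function.Involutive (reflectHoriz c) := fun p => by
  simp [reflectHoriz]

theorem reflectAntidiag_sub (p : ℚ × ℚ) :
    (reflectAntidiag c p).1 - (reflectAntidiag c p).2 = p.1 - p.2 := by
  simp only [reflectAntidiag]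
  ring

theorem reflectDiag_add (p : ℚ × ℚ) :
    (reflectDiag c p).1 + (reflectDiag c p).2 = p.1 + p.2 := by
  simp only [reflectDiag]
  ring

end Reflections

section Foursome

variable {x y a b : ℚ}

def foursome (x y a b : ℚ) : Finset (ℚ × ℚ) :=
  {(x + a, y + b), (x - a, y - b), (x - b, y + a), (x + b, y - a)}

def foursomeFlip (x y a b : ℚ) : Finset (ℚ × ℚ) :=
  {(x + a, y - b), (x - a, y + b), (x - b, y - a), (x + b, y + a)}

theorem foursome_image_reflectHoriz :
    (foursome x y a b).image (reflectHoriz (x, y)) = foursomeFlip x y a b := by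
  simp only [foursome, foursomeFlip, image_insert, image_singleton, reflectHoriz]
  ring_nf

theorem card_foursomeFlip : (foursomeFlip x y a b).card = (foursome x y a b).card := by
  rw [← foursome_image_reflectHoriz]
  exact card_image_of_injective _ (reflectHoriz_involutive _).injective

theorem reflectHoriz_mem_foursomeFlip {q : ℚ × ℚ} (hq : q ∈ foursome x y a b) :
    reflectHoriz (x, y) q ∈ foursomeFlip x y a b :=
  foursome_image_reflectHoriz ▸ mem_image_of_mem _ hq

theorem reflectVert_mem_foursomeFlip {q : ℚ × ℚ} (hq : q ∈ foursome x y a b) :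
    reflectVert (x, y) q ∈ foursomeFlip x y a b := by
  simp only [foursome, foursomeFlip, mem_insert, mem_singleton, reflectVert] at hq ⊢
  rcases hq with rfl | rfl | rfl | rfl <;> ring_nf <;> simp

theorem reflectAntidiag_mem_foursomeFlip {q : ℚ × ℚ} (hq : q ∈ foursome x y a b) :
    reflectAntidiag (x, y) q ∈ foursomeFlip x y a b := by
  simp only [foursome, foursomeFlip, mem_insert, mem_singleton, reflectAntidiag] at hq ⊢
  rcases hq with rfl | rfl | rfl | rfl <;> ring_nf <;> simp

theorem reflectDiag_mem_foursomeFlip {q : ℚ × ℚ} (hq : q ∈ foursome x y a b) :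
    reflectDiag (x, y) q ∈ foursomeFlip x y a b := by
  simp only [foursome, foursomeFlip, mem_insert, mem_singleton, reflectDiag] at hq ⊢
  rcases hq with rfl | rfl | rfl | rfl <;> ring_nf <;> simp

theorem exists_mem_foursomeFlip_sharesLine {q p : ℚ × ℚ} (hq : q ∈ foursome x y a b)
    (hqp : SharesLine q p) : ∃ r ∈ foursomeFlip x y a b, SharesLine r p := by
  rcases hqp with h | h | h | h
  · exact ⟨_, reflectHoriz_mem_foursomeFlip hq, Or.inl h⟩
  · exact ⟨_, reflectVert_mem_foursomeFlip hq, Or.inr (Or.inl h)⟩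
  · exact ⟨_, reflectAntidiag_mem_foursomeFlip hq,
      Or.inr (Or.inr (Or.inl ((reflectAntidiag_sub _ q).trans h)))⟩
  · exact ⟨_, reflectDiag_mem_foursomeFlip hq,
      Or.inr (Or.inr (Or.inr ((reflectDiag_add _ q).trans h)))⟩

end Foursome

theorem foursome_flip_dominates_general (m n : ℕ) (x y a b : ℚ)
    (D F F' : Finset (ℚ × ℚ))
    (hF : F = {(x + a, y + b), (x - a, y - b), (x - b, y + a), (x + b, y - a)})
    (hF' : F' = {(x + a, y - b), (x - a, y + b), (x - b, y - a), (x + b, y + a)})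
    (hdom : DominatesQ (boardQ m n) D)
    (hFD : F ⊆ D) (hdisj : Disjoint F' (D \ F)) :
    DominatesQ (boardQ m n) ((D \ F) ∪ F') ∧ ((D \ F) ∪ F').card = D.card := by
  subst hF hF'
  exact ⟨hdom.sdiff_union fun _ hq _ => exists_mem_foursomeFlip_sharesLine hq,
    card_sdiff_union_of_card_eq hFD hdisj card_foursomeFlip⟩

/-- Replacing a foursome contained in a dominating set of Q_{m×n} by its horizontal
reflection yields a dominating set of the same size. -/
theorem foursome_flip_dominates (m n : ℕ) (x y a b : ℚ)
    (hab : a ≠ b) (ha : a ≠ 0) (hb : b ≠ 0)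
    (D F F' : Finset (ℚ × ℚ))
    (hF : F = {(x + a, y + b), (x - a, y - b), (x - b, y + a), (x + b, y - a)})
    (hF' : F' = {(x + a, y - b), (x - a, y + b), (x - b, y - a), (x + b, y + a)})
    (hDB : ↑D ⊆ boardQ m n) (hdom : DominatesQ (boardQ m n) D)
    (hFD : F ⊆ D) (hF'B : ↑F' ⊆ boardQ m n) (hdisj : Disjoint F' (D \ F)) :
    DominatesQ (boardQ m n) ((D \ F) ∪ F') ∧ ((D \ F) ∪ F').card = D.card :=
  foursome_flip_dominates_general m n x y a b D F F' hF hF' hdom hFD hdisj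
end

section
/- For m ≥ 3, γ(Q_{m×(2m−3)}) ≤ m−2, witnessed by m−2 queens occupying all squares of a central column-segment: placing the board with rows 1..m and columns 1..(2m−3), the set D = {(m−1, y) : 2 ≤ y ≤ m−1} dominates Q_{m×(2m−3)}. -/
/-!
A queen at `(m - 1, y)` on the middle column covers row `y`, the whole middle column, and the
squares `(x, y ± |x - (m - 1)|)` on its diagonals. Rows `2, …, m - 1` are covered by rows;
a square in row `1` or `m` off the middle column lies at horizontal distance `d` with
`1 ≤ d ≤ m - 2` from it, since the board has `2m - 3` columns, so it is covered diagonally by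
the queen in row `1 + d`, respectively `m - d`.
-/

open Finset

noncomputable def columnSegment (c a b : ℤ) : Finset (ℤ × ℤ) :=
  (Icc a b).image (fun y => (c, y))

theorem mem_columnSegment {c a b : ℤ} {p : ℤ × ℤ} :
    p ∈ columnSegment c a b ↔ p.1 = c ∧ a ≤ p.2 ∧ p.2 ≤ b := by
  obtain ⟨x, y⟩ := p
  simp only [columnSegment, mem_image, mem_Icc, Prod.mk.injEq]
  constructor
  · rintro ⟨y, ⟨hay, hyb⟩, rfl, rfl⟩
    exact ⟨rfl, hay, hyb⟩
  · rintro ⟨rfl, hay, hyb⟩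
    exact ⟨y, ⟨hay, hyb⟩, rfl, rfl⟩

theorem card_columnSegment (c a b : ℤ) : #(columnSegment c a b) = (b + 1 - a).toNat := by
  rw [columnSegment, card_image_of_injective _ (fun _ _ h => (Prod.mk.inj h).2), Int.card_Icc]

theorem columnSegment_subset_board {m n : ℕ} {c a b : ℤ} (hc : 1 ≤ c) (hcn : c ≤ n)
    (ha : 1 ≤ a) (hbm : b ≤ m) : columnSegment c a b ⊆ board m n := by
  intro p hp
  rw [mem_columnSegment] at hp
  simp only [board, mem_product, mem_Icc]
  omega

theorem exists_attacks_of_not_mem_columnSegment {c a b y : ℤ} {p : ℤ × ℤ}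
    (hp : p ∉ columnSegment c a b) (hay : a ≤ y) (hyb : y ≤ b)
    (hline : c = p.1 ∨ y = p.2 ∨ |c - p.1| = |y - p.2|) :
    ∃ q ∈ columnSegment c a b, attacks q p := by
  have hq : ((c, y) : ℤ × ℤ) ∈ columnSegment c a b := mem_columnSegment.2 ⟨rfl, hay, hyb⟩
  exact ⟨(c, y), hq, fun h => hp (h ▸ hq), hline⟩

theorem gamma_le_card_of_dominates {m n : ℕ} {D : Finset (ℤ × ℤ)} (hD : D ⊆ board m n)
    (h : Dominates (board m n) D) : gamma m n ≤ #D :=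
  Nat.sInf_le ⟨D, hD, rfl, h⟩

theorem dominates_board_central_columnSegment (m : ℕ) (hm : 3 ≤ m) :
    Dominates (board m (2 * m - 3)) (columnSegment ((m : ℤ) - 1) 2 ((m : ℤ) - 1)) := by
  intro p hp
  simp only [board, mem_product, mem_Icc] at hp
  refine or_iff_not_imp_left.2 fun hpS => ?_
  by_cases hrow : 2 ≤ p.2 ∧ p.2 ≤ (m : ℤ) - 1
  · exact exists_attacks_of_not_mem_columnSegment hpS hrow.1 hrow.2 (Or.inr (Or.inl rfl))
  by_cases hcol : (m : ℤ) - 1 = p.1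
  · exact exists_attacks_of_not_mem_columnSegment hpS le_rfl (by omega) (Or.inl hcol)
  set d := |(m : ℤ) - 1 - p.1|
  have hd_pos : 0 < d := abs_pos.2 (sub_ne_zero.2 hcol)
  have hd_le : d ≤ (m : ℤ) - 2 := abs_le.2 ⟨by omega, by omega⟩
  rcases (show p.2 = 1 ∨ p.2 = m by omega) with hp1 | hpm
  · refine exists_attacks_of_not_mem_columnSegment (y := 1 + d) hpS (by omega) (by omega)
      (Or.inr (Or.inr ?_))
    rw [hp1, add_sub_cancel_left, abs_of_pos hd_pos]
  · refine exists_attacks_of_not_mem_columnSegment (y := m - d) hpS (by omega) (by omega)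
      (Or.inr (Or.inr ?_))
    rw [hpm, sub_sub_cancel_left, abs_neg, abs_of_pos hd_pos]

/-- For m ≥ 3, the m−2 queens {(m−1, y) : 2 ≤ y ≤ m−1} on the middle column
dominate the m×(2m−3) board; hence γ(Q_{m×(2m−3)}) ≤ m−2. -/
theorem central_column_dominates (m : ℕ) (hm : 3 ≤ m) :
    Dominates (board m (2 * m - 3))
      ((Finset.Icc (2 : ℤ) ((m : ℤ) - 1)).image (fun y => ((m : ℤ) - 1, y))) ∧
    ((Finset.Icc (2 : ℤ) ((m : ℤ) - 1)).image (fun y => ((m : ℤ) - 1, y))).card = m - 2 ∧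
    gamma m (2 * m - 3) ≤ m - 2 := by
  change Dominates _ (columnSegment _ 2 _) ∧ #(columnSegment _ 2 _) = _ ∧ _
  have hdom := dominates_board_central_columnSegment m hm
  have hcard : #(columnSegment ((m : ℤ) - 1) 2 ((m : ℤ) - 1)) = m - 2 := by
    rw [card_columnSegment]
    omega
  have hsub : columnSegment ((m : ℤ) - 1) 2 ((m : ℤ) - 1) ⊆ board m (2 * m - 3) :=
    columnSegment_subset_board (by omega) (by omega) (by norm_num) (by omega)
  exact ⟨hdom, hcard, hcard ▸ gamma_le_card_of_dominates hsub hdom⟩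
end

section
/- Let m₁ ≥ n₁ ≥ 1 with not both even, let k ≥ 0, and set m = m₁ + 2n₁ − 2k, n = 2m₁ + n₁ − 2k, g = m₁ + n₁ − 2k − 1. Let B be the m×n board centered at the origin and C its central m₁×n₁ sub-board. Suppose D is a set of squares of B such that: (i) D meets every (extended) column of C; (ii) D meets every (extended) row of C; (iii) for each difference-diagonal number δ with |δ| ≤ m₁+n₁−2k−2 (of the right parity), D contains exactly one square on that diagonal, and no square of D lies on a diagonal with |δ| > m₁+n₁−2k−2; (iv) similarly for sum diagonals. Then D is a dominating set of Q_{m×n} and |D| = g. -/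
/-! A square outside the extended rows and columns of `C` has, by parity, `|x| ≥ n₁ + 1` and
`|y| ≥ m₁ + 1`; since `B` reaches exactly `g - 1` beyond these bounds in both directions, the
difference diagonal (if `x` and `y` have equal signs) or the sum diagonal (otherwise) through it
has number at most `g - 1` in absolute value, so it carries a queen of `D`. The difference
diagonals meet `D` once each, and there are exactly `g` of them, so `|D| = g`. -/

open Finset

lemma mem_or_exists_attacks_of_mem_line {D : Finset (ℤ × ℤ)} {p q : ℤ × ℤ} (hq : q ∈ D)
    (hline : q.1 = p.1 ∨ q.2 = p.2 ∨ q.2 - q.1 = p.2 - p.1 ∨ q.2 + q.1 = p.2 + p.1) :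
    p ∈ D ∨ ∃ q ∈ D, attacks q p := by
  rcases eq_or_ne q p with rfl | hne
  · exact Or.inl hq
  refine Or.inr ⟨q, hq, hne, ?_⟩
  rcases hline with h | h | h | h
  · exact Or.inl h
  · exact Or.inr (Or.inl h)
  · exact Or.inr (Or.inr (by rw [show q.1 - p.1 = q.2 - p.2 by omega]))
  · exact Or.inr (Or.inr (by rw [show q.1 - p.1 = -(q.2 - p.2) by omega, abs_neg]))

lemma add_one_le_abs_of_modEq {x a : ℤ} (hlt : a - 1 < |x|) (hx : x ≡ a - 1 [ZMOD 2]) :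
    a + 1 ≤ |x| := by
  unfold Int.ModEq at hx
  rcases abs_cases x with ⟨h, -⟩ | ⟨h, -⟩ <;> rw [h] at hlt ⊢ <;> omega

lemma abs_sub_le_or_abs_add_le {x y a b h : ℤ} (hxa : a ≤ |x|) (hxb : |x| ≤ b + h)
    (hyb : b ≤ |y|) (hya : |y| ≤ a + h) : |y - x| ≤ h ∨ |y + x| ≤ h := by
  rw [abs_le, abs_le]
  rcases abs_cases x with ⟨hx₀, -⟩ | ⟨hx₀, -⟩ <;> rcases abs_cases y with ⟨hy₀, -⟩ | ⟨hy₀, -⟩ <;>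
    omega

theorem mem_or_exists_attacks_of_centrally_strong {m₁ n₁ k m n g : ℤ}
    (hm : m = m₁ + 2 * n₁ - 2 * k) (hn : n = 2 * m₁ + n₁ - 2 * k) (hg : g = m₁ + n₁ - 2 * k - 1)
    {D : Finset (ℤ × ℤ)}
    (hcols : ∀ x : ℤ, |x| ≤ n₁ - 1 → x ≡ n - 1 [ZMOD 2] → ∃ p ∈ D, p.1 = x)
    (hrows : ∀ y : ℤ, |y| ≤ m₁ - 1 → y ≡ m - 1 [ZMOD 2] → ∃ p ∈ D, p.2 = y)
    (hdiff : ∀ δ : ℤ, |δ| ≤ g - 1 → δ ≡ m - n [ZMOD 2] → ∃ p ∈ D, p.2 - p.1 = δ)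
    (hsum : ∀ σ : ℤ, |σ| ≤ g - 1 → σ ≡ m + n [ZMOD 2] → ∃ p ∈ D, p.2 + p.1 = σ)
    {p : ℤ × ℤ} (hx : |p.1| ≤ n - 1) (hy : |p.2| ≤ m - 1)
    (hx₂ : p.1 ≡ n - 1 [ZMOD 2]) (hy₂ : p.2 ≡ m - 1 [ZMOD 2]) :
    p ∈ D ∨ ∃ q ∈ D, attacks q p := by
  by_cases hcol : |p.1| ≤ n₁ - 1
  · obtain ⟨q, hq, hqx⟩ := hcols p.1 hcol hx₂
    exact mem_or_exists_attacks_of_mem_line hq (Or.inl hqx)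
  by_cases hrow : |p.2| ≤ m₁ - 1
  · obtain ⟨q, hq, hqy⟩ := hrows p.2 hrow hy₂
    exact mem_or_exists_attacks_of_mem_line hq (Or.inr (Or.inl hqy))
  unfold Int.ModEq at hx₂ hy₂
  have hx₁ : n₁ + 1 ≤ |p.1| :=
    add_one_le_abs_of_modEq (not_le.mp hcol) (by unfold Int.ModEq; omega)
  have hy₁ : m₁ + 1 ≤ |p.2| :=
    add_one_le_abs_of_modEq (not_le.mp hrow) (by unfold Int.ModEq; omega)
  rcases abs_sub_le_or_abs_add_le (h := g - 1) hx₁ (by omega) hy₁ (by omega) with hδ | hσ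
  · obtain ⟨q, hq, hqδ⟩ := hdiff _ hδ (by unfold Int.ModEq; omega)
    exact mem_or_exists_attacks_of_mem_line hq (Or.inr (Or.inr (Or.inl hqδ)))
  · obtain ⟨q, hq, hqσ⟩ := hsum _ hσ (by unfold Int.ModEq; omega)
    exact mem_or_exists_attacks_of_mem_line hq (Or.inr (Or.inr (Or.inr hqσ)))

lemma Finset.card_eq_of_existsUnique {α β : Type*} {s : Finset α} {t : Finset β} {f : α → β}
    (hf : ∀ a ∈ s, f a ∈ t) (huniq : ∀ b ∈ t, ∃! a, a ∈ s ∧ f a = b) : #s = #t :=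
  card_nbij f hf
    (fun a ha _ ha' h => (huniq _ (hf a ha)).unique ⟨ha, rfl⟩ ⟨ha', h.symm⟩)
    (fun b hb => (huniq b hb).exists)

lemma card_filter_Icc_modEq_two (g : ℕ) {c : ℤ} (hc : c ≡ g - 1 [ZMOD 2]) :
    #{δ ∈ Icc (1 - g : ℤ) (g - 1) | δ ≡ c [ZMOD 2]} = g := by
  have himage : {δ ∈ Icc (1 - g : ℤ) (g - 1) | δ ≡ c [ZMOD 2]} =
      (range g).image (fun i : ℕ => 2 * (i : ℤ) + 1 - g) := by
    ext δ
    simp only [mem_filter, mem_Icc, mem_image, mem_range]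
    unfold Int.ModEq at hc ⊢
    constructor
    · rintro ⟨hδ, hδc⟩
      exact ⟨((δ + g - 1) / 2).toNat, by omega, by omega⟩
    · rintro ⟨i, hi, rfl⟩
      omega
  rw [himage, card_image_of_injective _ (fun i j h => by omega), card_range]

lemma card_eq_of_existsUnique_diff (g : ℕ) {c : ℤ} (hc : c ≡ g - 1 [ZMOD 2])
    {D : Finset (ℤ × ℤ)} (hpar : ∀ p ∈ D, p.2 - p.1 ≡ c [ZMOD 2])
    (hdiff : ∀ δ : ℤ, |δ| ≤ (g : ℤ) - 1 → δ ≡ c [ZMOD 2] → ∃! p, p ∈ D ∧ p.2 - p.1 = δ)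
    (hdiffbd : ∀ p ∈ D, |p.2 - p.1| ≤ (g : ℤ) - 1) : #D = g := by
  rw [← card_filter_Icc_modEq_two g hc]
  refine card_eq_of_existsUnique (f := fun p => p.2 - p.1) (fun p hp => ?_) (fun δ hδ => ?_)
  · obtain ⟨hlo, hhi⟩ := abs_le.mp (hdiffbd p hp)
    exact mem_filter.mpr ⟨mem_Icc.mpr ⟨by omega, hhi⟩, hpar p hp⟩
  · obtain ⟨⟨hlo, hhi⟩, hδc⟩ := by simpa only [mem_filter, mem_Icc] using hδ
    exact hdiff δ (abs_le.mpr ⟨by omega, hhi⟩) hδc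

theorem centrally_strong_dominates_general (m₁ n₁ k : ℕ) (hk : 2 * k + 1 ≤ n₁)
    (m n g : ℕ) (hm : m = m₁ + 2 * n₁ - 2 * k) (hn : n = 2 * m₁ + n₁ - 2 * k)
    (hg : g = m₁ + n₁ - 2 * k - 1)
    (B : Set (ℤ × ℤ))
    (hB : B = {p : ℤ × ℤ | |p.1| ≤ (n : ℤ) - 1 ∧ |p.2| ≤ (m : ℤ) - 1 ∧
      p.1 ≡ (n : ℤ) - 1 [ZMOD 2] ∧ p.2 ≡ (m : ℤ) - 1 [ZMOD 2]})
    (D : Finset (ℤ × ℤ)) (hD : ↑D ⊆ B)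
    (hcols : ∀ x : ℤ, |x| ≤ (n₁ : ℤ) - 1 → x ≡ (n : ℤ) - 1 [ZMOD 2] → ∃ p ∈ D, p.1 = x)
    (hrows : ∀ y : ℤ, |y| ≤ (m₁ : ℤ) - 1 → y ≡ (m : ℤ) - 1 [ZMOD 2] → ∃ p ∈ D, p.2 = y)
    (hdiff : ∀ δ : ℤ, |δ| ≤ (g : ℤ) - 1 → δ ≡ (m : ℤ) - (n : ℤ) [ZMOD 2] →
      ∃! p, p ∈ D ∧ p.2 - p.1 = δ)
    (hdiffbd : ∀ p ∈ D, |p.2 - p.1| ≤ (g : ℤ) - 1)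
    (hsum : ∀ σ : ℤ, |σ| ≤ (g : ℤ) - 1 → σ ≡ (m : ℤ) + (n : ℤ) [ZMOD 2] →
      ∃! p, p ∈ D ∧ p.2 + p.1 = σ) :
    (∀ p ∈ B, p ∈ D ∨ ∃ q ∈ D, attacks q p) ∧ D.card = g := by
  subst hB
  have hM : (m : ℤ) = m₁ + 2 * n₁ - 2 * k := by omega
  have hN : (n : ℤ) = 2 * m₁ + n₁ - 2 * k := by omega
  have hG : (g : ℤ) = m₁ + n₁ - 2 * k - 1 := by omega
  constructor
  · rintro p ⟨hx, hy, hx₂, hy₂⟩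
    exact mem_or_exists_attacks_of_centrally_strong hM hN hG hcols hrows
      (fun δ h h₂ => (hdiff δ h h₂).exists) (fun σ h h₂ => (hsum σ h h₂).exists) hx hy hx₂ hy₂
  · refine card_eq_of_existsUnique_diff g (by unfold Int.ModEq; omega) (fun p hp => ?_)
      hdiff hdiffbd
    obtain ⟨-, -, hx₂, hy₂⟩ := hD hp
    simpa using hy₂.sub hx₂

/-- Correctness of centrally strong sets: with m₁ ≥ n₁ ≥ 1 not both even, k ≥ 0
(with n₁ − 2k − 1 ≥ 0), m = m₁ + 2n₁ − 2k, n = 2m₁ + n₁ − 2k, g = m₁ + n₁ − 2k − 1,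
and board squares of edge length two centered at the origin, a set `D` meeting every
extended column and row of the central m₁×n₁ sub-board, and meeting every difference
(resp. sum) diagonal of allowed number exactly once and no others, is a dominating
set of Q_{m×n} of size g. -/
theorem centrally_strong_dominates (m₁ n₁ k : ℕ) (hn₁ : 1 ≤ n₁) (hmn₁ : n₁ ≤ m₁)
    (hpar : ¬ (Even m₁ ∧ Even n₁)) (hk : 2 * k + 1 ≤ n₁)
    (m n g : ℕ) (hm : m = m₁ + 2 * n₁ - 2 * k) (hn : n = 2 * m₁ + n₁ - 2 * k)
    (hg : g = m₁ + n₁ - 2 * k - 1)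
    (B : Set (ℤ × ℤ))
    (hB : B = {p : ℤ × ℤ | |p.1| ≤ (n : ℤ) - 1 ∧ |p.2| ≤ (m : ℤ) - 1 ∧
      p.1 ≡ (n : ℤ) - 1 [ZMOD 2] ∧ p.2 ≡ (m : ℤ) - 1 [ZMOD 2]})
    (D : Finset (ℤ × ℤ)) (hD : ↑D ⊆ B)
    (hcols : ∀ x : ℤ, |x| ≤ (n₁ : ℤ) - 1 → x ≡ (n : ℤ) - 1 [ZMOD 2] → ∃ p ∈ D, p.1 = x)
    (hrows : ∀ y : ℤ, |y| ≤ (m₁ : ℤ) - 1 → y ≡ (m : ℤ) - 1 [ZMOD 2] → ∃ p ∈ D, p.2 = y)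
    (hdiff : ∀ δ : ℤ, |δ| ≤ (g : ℤ) - 1 → δ ≡ (m : ℤ) - (n : ℤ) [ZMOD 2] →
      ∃! p, p ∈ D ∧ p.2 - p.1 = δ)
    (hdiffbd : ∀ p ∈ D, |p.2 - p.1| ≤ (g : ℤ) - 1)
    (hsum : ∀ σ : ℤ, |σ| ≤ (g : ℤ) - 1 → σ ≡ (m : ℤ) + (n : ℤ) [ZMOD 2] →
      ∃! p, p ∈ D ∧ p.2 + p.1 = σ)
    (hsumbd : ∀ p ∈ D, |p.2 + p.1| ≤ (g : ℤ) - 1) :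
    (∀ p ∈ B, p ∈ D ∨ ∃ q ∈ D, attacks q p) ∧ D.card = g :=
  centrally_strong_dominates_general m₁ n₁ k hk m n g hm hn hg B hB D hD hcols hrows hdiff hdiffbd
    hsum
end
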